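/- Let G and H be connected graphs with |V(G)| ≥ 3 and |V(H)| ≥ 2. If {g_1, g_2} is a monophonic set of G, then for any vertex h of H, the set {(g_1,h), (g_2,h)} is a monophonic set of the Cartesian product G □ H. -/

import Mathlib

open SimpleGraph

variable {V : Type*}

/-- A walk is an induced path if it is a path and every edge of the graph between
vertices of the walk is an edge of the walk. -/
def IsInducedPath (G : SimpleGraph V) {u v : V} (p : G.Walk u v) : Prop :=
  p.IsPath ∧ ∀ a b : V, a ∈ p.support → b ∈ p.support → G.Adj a b → p.toSubgraph.Adj a b

/-- The monophonic interval: all vertices lying on some induced `u,v`-path. -/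
def monoInterval (G : SimpleGraph V) (u v : V) : Set V :=
  {w | ∃ p : G.Walk u v, IsInducedPath G p ∧ w ∈ p.support}

/-- A set `S` is monophonic if every vertex lies in the monophonic interval
of some pair of vertices of `S`. -/
def IsMonophonicSet (G : SimpleGraph V) (S : Set V) : Prop :=
  ∀ w : V, ∃ x ∈ S, ∃ y ∈ S, w ∈ monoInterval G x y

/-- The monophonic number: least cardinality of a monophonic set. -/
noncomputable def monophonicNumber (G : SimpleGraph V) : ℕ :=
  sInf {n : ℕ | ∃ S : Finset V, S.card = n ∧ IsMonophonicSet G (S : Set V)}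

/-- A graph is strongly 2-monophonic if every pair of non-adjacent vertices is
a monophonic set. -/
def Strongly2Monophonic (G : SimpleGraph V) : Prop :=
  ∀ x y : V, x ≠ y → ¬ G.Adj x y → IsMonophonicSet G {x, y}

/-- A closed walk is an induced cycle if it is a cycle and every edge of the graph
between vertices of the walk is an edge of the walk. -/
def IsInducedCycle (G : SimpleGraph V) {a : V} (w : G.Walk a a) : Prop :=
  w.IsCycle ∧ ∀ u v : V, u ∈ w.support → v ∈ w.support → G.Adj u v → w.toSubgraph.Adj u v

/-- The Kneser graph `K(n,r)`: vertices are `r`-subsets of `[n]`, adjacent iff disjoint. -/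
def kneser (n r : ℕ) : SimpleGraph {s : Finset (Fin n) // s.card = r} where
  Adj a b := a ≠ b ∧ Disjoint a.1 b.1
  symm := ⟨fun _ _ h => ⟨h.1.symm, h.2.symm⟩⟩
  loopless := ⟨fun _ h => h.1 rfl⟩

/-- The Johnson graph `J(n,r)`: vertices are `r`-subsets of `[n]`, adjacent iff the
intersection has `r-1` elements. -/
def johnson (n r : ℕ) : SimpleGraph {s : Finset (Fin n) // s.card = r} where
  Adj a b := a ≠ b ∧ (a.1 ∩ b.1).card = r - 1
  symm := ⟨fun _ _ h => ⟨h.1.symm, by rw [Finset.inter_comm]; exact h.2⟩⟩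
  loopless := ⟨fun _ h => h.1 rfl⟩


/-
Since |V(G)| ≥ 3, some vertex other than g₁, g₂ lies on an induced g₁–g₂ path, so g₁ ≠ g₂ are not
adjacent and every vertex u lies on an induced g₁–g₂ path R of length at least 2, as one of three
consecutive vertices a – t – c of R. Given w ∈ H, take a shortest (hence induced) h–w path Q. In
G □ H follow R at level h up to a, climb Q in column a, cross a – t – c at level w, go back down Q
in column c and finish R at level h. As R and Q are induced and a, c are not adjacent, this is an
induced (g₁, h)–(g₂, h) path, and it passes through (u, w).
-/

open Walk

section InducedPath

variable {U : Type*} {G : SimpleGraph V} {K : SimpleGraph U} {u v w : V}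

theorem isInducedPath_iff (p : G.Walk u v) : IsInducedPath G p ↔
    p.IsPath ∧ ∀ ⦃x y⦄, x ∈ p.support → y ∈ p.support → G.Adj x y → s(x, y) ∈ p.edges := by
  simp only [IsInducedPath, ← Subgraph.mem_edgeSet, mem_edges_toSubgraph]

theorem IsInducedPath.reverse {p : G.Walk u v} (hp : IsInducedPath G p) :
    IsInducedPath G p.reverse := by
  rw [isInducedPath_iff] at hp ⊢
  simpa only [support_reverse, edges_reverse, List.mem_reverse, isPath_reverse_iff] using hp

theorem IsInducedPath.map (f : G ↪g K) {p : G.Walk u v} (hp : IsInducedPath G p) :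
    IsInducedPath K (p.map f.toHom) := by
  rw [isInducedPath_iff] at hp ⊢
  refine ⟨hp.1.map f.injective, ?_⟩
  simp only [Walk.support_map, edges_map, List.mem_map]
  rintro _ _ ⟨x, hx, rfl⟩ ⟨y, hy, rfl⟩ hxy
  exact ⟨s(x, y), hp.2 hx hy (f.map_adj_iff.mp hxy), rfl⟩

theorem isPath_append_iff {p : G.Walk u v} {q : G.Walk v w} :
    (p.append q).IsPath ↔ p.IsPath ∧ q.IsPath ∧ ∀ x ∈ p.support, x ∈ q.support → x = v := by
  refine ⟨fun h => ⟨h.of_append_left, h.of_append_right, fun x hx hxq => ?_⟩,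
    fun ⟨hp, hq, hpq⟩ => ?_⟩
  · by_contra hxv
    exact h.ne_of_mem_support_of_append hxv hx hxq rfl
  · have hv : v ∉ q.support.tail := by
      have := hq.support_nodup
      rw [← cons_tail_support] at this
      exact (List.nodup_cons.mp this).1
    rw [isPath_def, support_append, List.nodup_append]
    refine ⟨hp.support_nodup, hq.support_nodup.sublist (List.tail_sublist _), ?_⟩
    rintro x hx _ hx' rfl
    exact hv (hpq x hx (List.mem_of_mem_tail hx') ▸ hx')

theorem isInducedPath_append_iff {p : G.Walk u v} {q : G.Walk v w} :
    IsInducedPath G (p.append q) ↔ IsInducedPath G p ∧ IsInducedPath G q ∧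
      (∀ x ∈ p.support, x ∈ q.support → x = v) ∧
      ∀ x ∈ p.support, ∀ y ∈ q.support, G.Adj x y → x = v ∨ y = v := by
  simp only [isInducedPath_iff, isPath_append_iff, mem_support_append_iff, edges_append,
    List.mem_append]
  constructor
  · rintro ⟨⟨hp, hq, hpq⟩, hc⟩
    refine ⟨⟨hp, fun x y hx hy hxy => ?_⟩, ⟨hq, fun x y hx hy hxy => ?_⟩, hpq,
      fun x hx y hy hxy => ?_⟩
    · refine (hc (.inl hx) (.inl hy) hxy).resolve_right fun he => hxy.ne ?_
      rw [hpq x hx (q.fst_mem_support_of_mem_edges he),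
        hpq y hy (q.snd_mem_support_of_mem_edges he)]
    · refine (hc (.inr hx) (.inr hy) hxy).resolve_left fun he => hxy.ne ?_
      rw [hpq x (p.fst_mem_support_of_mem_edges he) hx,
        hpq y (p.snd_mem_support_of_mem_edges he) hy]
    · rcases hc (.inl hx) (.inr hy) hxy with he | he
      · exact .inr (hpq y (p.snd_mem_support_of_mem_edges he) hy)
      · exact .inl (hpq x hx (q.fst_mem_support_of_mem_edges he))
  · rintro ⟨⟨hp, hp'⟩, ⟨hq, hq'⟩, hpq, hc⟩
    refine ⟨⟨hp, hq, hpq⟩, ?_⟩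
    rintro x y (hx | hx) (hy | hy) hxy
    · exact .inl (hp' hx hy hxy)
    · rcases hc x hx y hy hxy with rfl | rfl
      · exact .inr (hq' q.start_mem_support hy hxy)
      · exact .inl (hp' hx p.end_mem_support hxy)
    · rcases hc y hy x hx hxy.symm with rfl | rfl
      · exact .inr (hq' hx q.start_mem_support hxy)
      · exact .inl (hp' p.end_mem_support hy hxy)
    · exact .inr (hq' hx hy hxy)

theorem isInducedPath_cons_iff (e : G.Adj u v) (p : G.Walk v w) :
    IsInducedPath G (cons e p) ↔
      IsInducedPath G p ∧ u ∉ p.support ∧ ∀ x ∈ p.support, G.Adj u x → x = v := by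
  have hcons : cons e p = e.toWalk.append p := rfl
  have he : IsInducedPath G e.toWalk :=
    (isInducedPath_iff _).2
      ⟨e.isPath_toWalk, isChordless_iff_forall_mem_edges.1 e.isChordless_toWalk⟩
  rw [hcons, isInducedPath_append_iff]
  simp [he, e.ne]

theorem isInducedPath_of_length_eq_dist {p : G.Walk u v} (hp : p.length = G.dist u v) :
    IsInducedPath G p := by
  refine (isInducedPath_iff p).2 ⟨p.isPath_of_length_eq_dist hp, ?_⟩
  suffices key : ∀ i j, i < j → j ≤ p.length → G.Adj (p.getVert i) (p.getVert j) → j = i + 1 by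
    intro x y hx hy hxy
    obtain ⟨i, rfl, hi⟩ := mem_support_iff_exists_getVert.1 hx
    obtain ⟨j, rfl, hj⟩ := mem_support_iff_exists_getVert.1 hy
    rcases lt_trichotomy i j with hij | rfl | hji
    · obtain rfl := key i j hij hj hxy
      exact p.mk_mem_edges_iff_exists.2 ⟨i, by omega, rfl⟩
    · exact absurd hxy (G.loopless.irrefl _)
    · obtain rfl := key j i hji hi hxy.symm
      exact p.mk_mem_edges_iff_exists.2 ⟨j, by omega, Sym2.eq_swap⟩
  intro i j hij hj hadj
  by_contra hne
  -- otherwise the chord shortcuts `p`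
  have := G.dist_le ((p.take i).append (cons hadj (p.drop j)))
  simp only [length_append, length_cons, take_length, drop_length] at this
  omega

theorem SimpleGraph.Reachable.exists_isInducedPath (h : G.Reachable u v) :
    ∃ p : G.Walk u v, IsInducedPath G p :=
  h.exists_walk_length_eq_dist.imp fun _ => isInducedPath_of_length_eq_dist

theorem SimpleGraph.Walk.exists_eq_append_cons_cons {p : G.Walk u v} (hp : 2 ≤ p.length)
    {x : V} (hx : x ∈ p.support) :
    ∃ (a t c : V) (A : G.Walk u a) (e₁ : G.Adj a t) (e₂ : G.Adj t c) (B : G.Walk c v),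
      p = A.append (cons e₁ (cons e₂ B)) ∧ (x = a ∨ x = t ∨ x = c) := by
  induction p with
  | nil => simp at hp
  | @cons u t v e₁ p ih =>
    cases p with
    | nil => simp at hp
    | @cons _ c _ e₂ B =>
      by_cases hx' : x = u ∨ x = t ∨ x = c
      · exact ⟨u, t, c, nil, e₁, e₂, B, rfl, hx'⟩
      · have hxB : x ∈ B.support := by simp_all
        have hB : ¬B.Nil := by
          rintro ⟨⟩
          simp_all
        obtain ⟨a, t', c', A, e₁', e₂', B', heq, hx''⟩ :=
          ih (by simpa [Nat.one_le_iff_ne_zero] using hB) (by simp [hxB])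
        exact ⟨a, t', c', cons e₁ A, e₁', e₂', B', by rw [heq, cons_append], hx''⟩

end InducedPath

section BoxProd

variable {W : Type*} {G : SimpleGraph V} {H : SimpleGraph W}

theorem mem_support_boxProdLeft {x y : V} (b : W) (p : G.Walk x y) (z : V × W) :
    z ∈ (p.boxProdLeft H b).support ↔ z.1 ∈ p.support ∧ z.2 = b := by
  change z ∈ (p.map (G.boxProdLeft H b).toHom).support ↔ _
  rw [Walk.support_map, List.mem_map]
  constructor
  · rintro ⟨x, hx, rfl⟩
    exact ⟨hx, rfl⟩
  · rintro ⟨hx, hz⟩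
    exact ⟨z.1, hx, Prod.ext rfl hz.symm⟩

theorem mem_support_boxProdRight {x y : W} (a : V) (q : H.Walk x y) (z : V × W) :
    z ∈ (q.boxProdRight G a).support ↔ z.1 = a ∧ z.2 ∈ q.support := by
  change z ∈ (q.map (G.boxProdRight H a).toHom).support ↔ _
  rw [Walk.support_map, List.mem_map]
  constructor
  · rintro ⟨x, hx, rfl⟩
    exact ⟨rfl, hx⟩
  · rintro ⟨hz, hx⟩
    exact ⟨z.2, hx, Prod.ext hz.symm rfl⟩

theorem mem_support_boxProd_corner {g a : V} {h w : W} (A : G.Walk g a) (Q : H.Walk h w)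
    (z : V × W) : z ∈ ((A.boxProdLeft H h).append (Q.boxProdRight G a)).support ↔
      z.1 ∈ A.support ∧ z.2 = h ∨ z.1 = a ∧ z.2 ∈ Q.support := by
  rw [mem_support_append_iff, mem_support_boxProdLeft, mem_support_boxProdRight]

theorem IsInducedPath.boxProd_corner {g a : V} {h w : W} {A : G.Walk g a} {Q : H.Walk h w}
    (hA : IsInducedPath G A) (hQ : IsInducedPath H Q) :
    IsInducedPath (G □ H) ((A.boxProdLeft H h).append (Q.boxProdRight G a)) := by
  refine isInducedPath_append_iff.2 ⟨hA.map _, hQ.map _, ?_, ?_⟩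
  · simp only [mem_support_boxProdLeft, mem_support_boxProdRight, Prod.forall, Prod.mk.injEq]
    grind
  · simp only [mem_support_boxProdLeft, mem_support_boxProdRight, Prod.forall, Prod.mk.injEq,
      boxProd_adj]
    grind

theorem exists_isInducedPath_boxProd_detour {g₁ g₂ a t c : V} {h w : W}
    {A : G.Walk g₁ a} {e₁ : G.Adj a t} {e₂ : G.Adj t c} {B : G.Walk c g₂}
    (hR : IsInducedPath G (A.append (cons e₁ (cons e₂ B)))) {Q : H.Walk h w}
    (hQ : IsInducedPath H Q) :
    ∃ p : (G □ H).Walk (g₁, h) (g₂, h), IsInducedPath (G □ H) p ∧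
      (a, w) ∈ p.support ∧ (t, w) ∈ p.support ∧ (c, w) ∈ p.support := by
  obtain ⟨hA, hM, hAM, hAMadj⟩ := isInducedPath_append_iff.1 hR
  obtain ⟨hM', ha, haadj⟩ := (isInducedPath_cons_iff _ _).1 hM
  obtain ⟨hB, ht, htadj⟩ := (isInducedPath_cons_iff _ _).1 hM'
  simp only [support_cons, List.mem_cons] at hAM hAMadj ha haadj
  have hcB : c ∈ B.support := B.start_mem_support
  let L := (A.boxProdLeft H h).append (Q.boxProdRight G a)
  let Rc := ((B.reverse.boxProdLeft H h).append (Q.boxProdRight G c)).reverse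
  refine ⟨L.append (cons (boxProd_adj_left.2 e₁) (cons (boxProd_adj_left.2 e₂) Rc)), ?_,
    by simp, by simp, by simp⟩
  rw [isInducedPath_append_iff, isInducedPath_cons_iff, isInducedPath_cons_iff]
  refine ⟨hA.boxProd_corner hQ, ⟨⟨(hB.reverse.boxProd_corner hQ).reverse, ?_, ?_⟩, ?_, ?_⟩, ?_, ?_⟩
  all_goals
    simp only [L, Rc, support_reverse, List.mem_reverse, mem_support_boxProd_corner,
      support_cons, List.mem_cons, Prod.forall, Prod.mk.injEq, boxProd_adj]
    grind [SimpleGraph.irrefl]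

end BoxProd

section Monophonic

variable {G : SimpleGraph V} {x y u : V}

theorem eq_of_mem_monoInterval_self (hu : u ∈ monoInterval G x x) : u = x := by
  obtain ⟨p, hp, hu⟩ := hu
  rw [nil_iff_support_eq.1 (isPath_iff_nil.1 hp.1)] at hu
  simpa using hu

theorem mem_monoInterval_symm (hu : u ∈ monoInterval G x y) : u ∈ monoInterval G y x :=
  let ⟨p, hp, hu⟩ := hu
  ⟨p.reverse, hp.reverse, by simpa using hu⟩

theorem left_mem_monoInterval (h : (monoInterval G x y).Nonempty) : x ∈ monoInterval G x y :=
  let ⟨_, p, hp, _⟩ := h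
  ⟨p, hp, p.start_mem_support⟩

theorem right_mem_monoInterval (h : (monoInterval G x y).Nonempty) : y ∈ monoInterval G x y :=
  let ⟨_, p, hp, _⟩ := h
  ⟨p, hp, p.end_mem_support⟩

theorem eq_or_eq_of_mem_monoInterval_of_adj (hxy : G.Adj x y) (hu : u ∈ monoInterval G x y) :
    u = x ∨ u = y := by
  obtain ⟨p, hp, hu⟩ := hu
  have hedge := ((isInducedPath_iff p).1 hp).2 p.start_mem_support p.end_mem_support hxy
  rw [hp.1.eq_adj_toWalk_of_mem_edges hedge] at hu
  simpa using hu

theorem IsMonophonicSet.mem_monoInterval_pair (hm : IsMonophonicSet G {x, y}) (hx : u ≠ x)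
    (hy : u ≠ y) : u ∈ monoInterval G x y := by
  obtain ⟨x', hx', y', hy', hu⟩ := hm u
  simp only [Set.mem_insert_iff, Set.mem_singleton_iff] at hx' hy'
  rcases hx' with rfl | rfl <;> rcases hy' with rfl | rfl
  · exact absurd (eq_of_mem_monoInterval_self hu) hx
  · exact hu
  · exact mem_monoInterval_symm hu
  · exact absurd (eq_of_mem_monoInterval_self hu) hy

theorem IsMonophonicSet.monoInterval_pair_eq_univ (hm : IsMonophonicSet G {x, y})
    (h : (monoInterval G x y).Nonempty) : monoInterval G x y = Set.univ := by
  refine Set.eq_univ_of_forall fun u => ?_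
  rcases eq_or_ne u x with rfl | hux
  · exact left_mem_monoInterval h
  rcases eq_or_ne u y with rfl | huy
  · exact right_mem_monoInterval h
  exact hm.mem_monoInterval_pair hux huy

end Monophonic

theorem mem_monoInterval_boxProd {W : Type*} {G : SimpleGraph V} {H : SimpleGraph W}
    {g₁ g₂ u : V} {h w : W} (hne : g₁ ≠ g₂) (hnadj : ¬G.Adj g₁ g₂)
    (hu : u ∈ monoInterval G g₁ g₂) (hw : H.Reachable h w) :
    (u, w) ∈ monoInterval (G □ H) (g₁, h) (g₂, h) := by
  obtain ⟨P, hP, huP⟩ := hu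
  obtain ⟨Q, hQ⟩ := hw.exists_isInducedPath
  have hlen : 2 ≤ P.length := by
    by_contra! hlt
    interval_cases hl : P.length
    · exact hne (eq_of_length_eq_zero hl)
    · exact hnadj (adj_of_length_eq_one hl)
  obtain ⟨a, t, c, A, e₁, e₂, B, rfl, hu⟩ := P.exists_eq_append_cons_cons hlen huP
  obtain ⟨p, hp, ha, ht, hc⟩ := exists_isInducedPath_boxProd_detour hP hQ
  exact ⟨p, hp, by rcases hu with rfl | rfl | rfl <;> assumption⟩

theorem stmt18_general {V W : Type*} [Fintype V]
    (G : SimpleGraph V) (H : SimpleGraph W)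
    (hH : H.Connected)
    (hcardG : 3 ≤ Fintype.card V)
    (g₁ g₂ : V) (hm : IsMonophonicSet G {g₁, g₂}) (h : W) :
    IsMonophonicSet (G □ H) {(g₁, h), (g₂, h)} := by
  obtain ⟨v, hv₁, hv₂⟩ : ∃ v, v ≠ g₁ ∧ v ≠ g₂ :=
    Cardinal.exists_ne_ne_of_three_le (by simpa using hcardG) g₁ g₂
  have hv : v ∈ monoInterval G g₁ g₂ := hm.mem_monoInterval_pair hv₁ hv₂
  have hne : g₁ ≠ g₂ := by
    rintro rfl
    exact hv₁ (eq_of_mem_monoInterval_self hv)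
  have hnadj : ¬G.Adj g₁ g₂ := fun hadj =>
    (eq_or_eq_of_mem_monoInterval_of_adj hadj hv).elim hv₁ hv₂
  have hall := hm.monoInterval_pair_eq_univ ⟨v, hv⟩
  rintro ⟨u, w⟩
  exact ⟨_, .inl rfl, _, .inr rfl,
    mem_monoInterval_boxProd hne hnadj (hall ▸ Set.mem_univ u) (hH.preconnected h w)⟩

theorem stmt18 {V W : Type*} [Fintype V] [Fintype W]
    (G : SimpleGraph V) (H : SimpleGraph W)
    (hG : G.Connected) (hH : H.Connected)
    (hcardG : 3 ≤ Fintype.card V) (hcardH : 2 ≤ Fintype.card W)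
    (g₁ g₂ : V) (hm : IsMonophonicSet G {g₁, g₂}) (h : W) :
    IsMonophonicSet (G □ H) {(g₁, h), (g₂, h)} :=
  stmt18_general G H hH hcardG g₁ g₂ hm h
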